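/- arXiv:1609.08325 — 5 statements merged into one kernel-verified Lean document; each statement's English description precedes it below -/
import Mathlib

section
/- Let T be a bounded linear operator on a complex Hilbert space H and let z = r e^{iθ} with r = |z| > ρ_θ(T). Then T − z is invertible and |z| − ρ_θ(T) ≤ Ψ_T(z) ≤ √( |z|² − 2 ρ_θ(T) |z| + ‖T‖² ). -/
/-!
Write `z = r e^{iθ}` and `A = T - z`. Rotating by `e^{-iθ}` gives
`Re ⟪e^{-iθ} A x, x⟫ = Re ⟪e^{-iθ} T x, x⟫ - r ‖x‖² ≤ -(r - ρ_θ(T)) ‖x‖²`, so `A` is coercive: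
it is invertible (Lax–Milgram) and `‖A x‖ ≥ (r - ρ_θ(T)) ‖x‖`, which is the lower bound.
For the upper bound, `Ψ_T(z) ≤ ‖A h‖` for every unit vector `h`, and
`‖A h‖² = ‖T h‖² - 2 r Re ⟪e^{-iθ} T h, h⟫ + r²`; taking the supremum of the middle term over `h`
gives `Ψ_T(z)² ≤ r² - 2 ρ_θ(T) r + ‖T‖²`.
-/

open Filter ContinuousLinearMap

open Classical in
/-- `Ψ_T(z) = 0` on the spectrum, `‖(T - z)⁻¹‖⁻¹` off the spectrum. -/
noncomputable def Psi {H : Type*} [NormedAddCommGroup H] [InnerProductSpace ℂ H]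
    (T : H →L[ℂ] H) (z : ℂ) : ℝ :=
  if z ∈ spectrum ℂ T then 0
  else ‖Ring.inverse (T - z • (1 : H →L[ℂ] H))‖⁻¹

/-- `ρ_θ(T) = sup {Re ⟨e^{-iθ} T h, h⟩ : ‖h‖ = 1}`. -/
noncomputable def rho {H : Type*} [NormedAddCommGroup H] [InnerProductSpace ℂ H]
    (T : H →L[ℂ] H) (θ : ℝ) : ℝ :=
  sSup {r : ℝ | ∃ h : H, ‖h‖ = 1 ∧
    r = (inner ℂ (Complex.exp (-(θ : ℂ) * Complex.I) • T h) h : ℂ).re}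

theorem notMem_spectrum_iff_isUnit_sub_smul_one {R A : Type*} [CommRing R] [Ring A] [Algebra R A]
    {r : R} {a : A} : r ∉ spectrum R a ↔ IsUnit (a - r • 1) := by
  rw [spectrum.notMem_iff, Algebra.algebraMap_eq_smul_one, ← neg_sub, IsUnit.neg_iff]

section Inverse

variable {𝕜 E : Type*} [NontriviallyNormedField 𝕜] [NormedAddCommGroup E] [NormedSpace 𝕜 E]

theorem ContinuousLinearMap.inv_norm_inverse_mul_le {A : E →L[𝕜] E} (hA : IsUnit A) (x : E) :
    ‖Ring.inverse A‖⁻¹ * ‖x‖ ≤ ‖A x‖ := by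
  have hx : ‖x‖ ≤ ‖Ring.inverse A‖ * ‖A x‖ := by
    calc ‖x‖ = ‖Ring.inverse A (A x)‖ := by
          rw [← mul_apply_eq_comp, Ring.inverse_mul_cancel A hA, one_apply_eq_self]
      _ ≤ ‖Ring.inverse A‖ * ‖A x‖ := le_opNorm _ _
  rcases (norm_nonneg (Ring.inverse A)).eq_or_lt with h0 | hpos
  · simp [← h0]
  · rwa [inv_mul_le_iff₀ hpos]

theorem ContinuousLinearMap.inv_le_inv_norm_inverse [Nontrivial E] {A : E →L[𝕜] E}
    (hA : IsUnit A) {K : NNReal} (hK : AntilipschitzWith K A) :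
    (K : ℝ)⁻¹ ≤ ‖Ring.inverse A‖⁻¹ := by
  have hpos : 0 < ‖Ring.inverse A‖ := norm_pos_iff.mpr hA.ringInverse.ne_zero
  refine inv_anti₀ hpos (opNorm_le_bound _ K.2 fun y => ?_)
  have hy : A (Ring.inverse A y) = y := by
    rw [← mul_apply_eq_comp, Ring.mul_inverse_cancel A hA, one_apply_eq_self]
  simpa [hy] using bound_of_antilipschitz A hK (Ring.inverse A y)

end Inverse

section NumericalRange

variable {H : Type*} [NormedAddCommGroup H] [InnerProductSpace ℂ H] (T : H →L[ℂ] H) (θ : ℝ)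

theorem norm_exp_neg_ofReal_mul_I : ‖Complex.exp (-(θ : ℂ) * Complex.I)‖ = 1 := by
  simpa using Complex.norm_exp_ofReal_mul_I (-θ)

theorem re_inner_exp_smul_le_norm (x : H) :
    (inner ℂ (Complex.exp (-(θ : ℂ) * Complex.I) • T x) x : ℂ).re ≤ ‖T‖ * ‖x‖ ^ 2 :=
  calc _ ≤ ‖(inner ℂ (Complex.exp (-(θ : ℂ) * Complex.I) • T x) x : ℂ)‖ := Complex.re_le_norm _
    _ ≤ ‖Complex.exp (-(θ : ℂ) * Complex.I) • T x‖ * ‖x‖ := norm_inner_le_norm _ _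
    _ = ‖T x‖ * ‖x‖ := by rw [norm_smul, norm_exp_neg_ofReal_mul_I, one_mul]
    _ ≤ ‖T‖ * ‖x‖ * ‖x‖ := by gcongr; exact T.le_opNorm x
    _ = ‖T‖ * ‖x‖ ^ 2 := by ring

theorem bddAbove_rho_set : BddAbove {r : ℝ | ∃ h : H, ‖h‖ = 1 ∧
    r = (inner ℂ (Complex.exp (-(θ : ℂ) * Complex.I) • T h) h : ℂ).re} := by
  refine ⟨‖T‖, ?_⟩
  rintro _ ⟨h, hh, rfl⟩
  simpa [hh] using re_inner_exp_smul_le_norm T θ h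

theorem re_inner_exp_smul_le_rho_mul_norm_sq (x : H) :
    (inner ℂ (Complex.exp (-(θ : ℂ) * Complex.I) • T x) x : ℂ).re ≤ rho T θ * ‖x‖ ^ 2 := by
  rcases eq_or_ne x 0 with rfl | hx
  · simp
  set t : ℝ := ‖x‖
  have ht : 0 < t := norm_pos_iff.mpr hx
  set u : H := ((t⁻¹ : ℝ) : ℂ) • x
  have hu : ‖u‖ = 1 := by simp [u, norm_smul, t, inv_mul_cancel₀ ht.ne']
  have hxu : x = (t : ℂ) • u := by simp [u, smul_smul, mul_inv_cancel₀ ht.ne']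
  have hscale : (inner ℂ (Complex.exp (-(θ : ℂ) * Complex.I) • T x) x : ℂ).re
      = t ^ 2 * (inner ℂ (Complex.exp (-(θ : ℂ) * Complex.I) • T u) u : ℂ).re := by
    rw [hxu, map_smul, smul_comm, inner_smul_left, inner_smul_right]
    simp only [Complex.conj_ofReal, ← mul_assoc, ← Complex.ofReal_mul, Complex.re_ofReal_mul]
    ring
  rw [hscale, mul_comm (rho T θ)]
  exact mul_le_mul_of_nonneg_left (le_csSup (bddAbove_rho_set T θ) ⟨u, hu, rfl⟩) (sq_nonneg t)

theorem mul_rho_le [Nontrivial H] {a K : ℝ} (ha : 0 ≤ a)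
    (h : ∀ x : H, ‖x‖ = 1 →
      a * (inner ℂ (Complex.exp (-(θ : ℂ) * Complex.I) • T x) x : ℂ).re ≤ K) :
    a * rho T θ ≤ K := by
  obtain ⟨x₀, hx₀⟩ := exists_norm_eq H zero_le_one
  rw [rho, ← smul_eq_mul, ← Real.sSup_smul_of_nonneg ha]
  refine csSup_le (Set.Nonempty.smul_set ⟨_, x₀, hx₀, rfl⟩) ?_
  rintro _ ⟨_, ⟨x, hx, rfl⟩, rfl⟩
  exact h x hx

end NumericalRange

section Resolvent

variable {H : Type*} [NormedAddCommGroup H] [InnerProductSpace ℂ H] {T : H →L[ℂ] H} {θ : ℝ}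
  {z : ℂ}

theorem exp_smul_sub_smul_one_apply (hz : z = (‖z‖ : ℂ) * Complex.exp ((θ : ℂ) * Complex.I))
    (x : H) : Complex.exp (-(θ : ℂ) * Complex.I) • (T - z • 1) x
      = Complex.exp (-(θ : ℂ) * Complex.I) • T x - (‖z‖ : ℂ) • x := by
  have hrot : Complex.exp (-(θ : ℂ) * Complex.I) * z = ‖z‖ := by
    rw [hz, mul_left_comm, ← Complex.exp_add]
    simp
  rw [sub_apply, smul_apply, one_apply_eq_self, smul_sub, smul_smul, hrot]

theorem norm_sub_smul_one_apply_sq (hz : z = (‖z‖ : ℂ) * Complex.exp ((θ : ℂ) * Complex.I))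
    (x : H) : ‖(T - z • 1) x‖ ^ 2 = ‖T x‖ ^ 2
      - 2 * ‖z‖ * (inner ℂ (Complex.exp (-(θ : ℂ) * Complex.I) • T x) x : ℂ).re
      + ‖z‖ ^ 2 * ‖x‖ ^ 2 := by
  have hnorm := congrArg norm (exp_smul_sub_smul_one_apply (T := T) hz x)
  rw [norm_smul, norm_exp_neg_ofReal_mul_I, one_mul] at hnorm
  rw [hnorm, @norm_sub_sq ℂ, inner_smul_right, norm_smul, norm_smul, norm_exp_neg_ofReal_mul_I]
  simp only [Complex.norm_real, Real.norm_eq_abs, abs_norm, RCLike.re_to_complex,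
    Complex.re_ofReal_mul]
  ring

theorem sub_rho_mul_norm_sq_le_norm_inner
    (hz : z = (‖z‖ : ℂ) * Complex.exp ((θ : ℂ) * Complex.I)) (x : H) :
    (‖z‖ - rho T θ) * ‖x‖ ^ 2 ≤ ‖(inner ℂ ((T - z • 1) x) x : ℂ)‖ := by
  have hre : (inner ℂ (Complex.exp (-(θ : ℂ) * Complex.I) • (T - z • 1) x) x : ℂ).re
      = (inner ℂ (Complex.exp (-(θ : ℂ) * Complex.I) • T x) x : ℂ).re - ‖z‖ * ‖x‖ ^ 2 := by
    rw [exp_smul_sub_smul_one_apply hz, inner_sub_left, Complex.sub_re, inner_smul_left (x := x),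
      Complex.conj_ofReal, Complex.re_ofReal_mul, ← inner_self_eq_norm_sq (𝕜 := ℂ) x]
    rfl
  calc (‖z‖ - rho T θ) * ‖x‖ ^ 2
      ≤ -(inner ℂ (Complex.exp (-(θ : ℂ) * Complex.I) • (T - z • 1) x) x : ℂ).re := by
        rw [hre]; linarith [re_inner_exp_smul_le_rho_mul_norm_sq T θ x]
    _ ≤ ‖(inner ℂ (Complex.exp (-(θ : ℂ) * Complex.I) • (T - z • 1) x) x : ℂ)‖ :=
        (neg_le_abs _).trans (Complex.abs_re_le_norm _)
    _ = ‖(inner ℂ ((T - z • 1) x) x : ℂ)‖ := by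
        rw [inner_smul_left, norm_mul, Complex.norm_conj, norm_exp_neg_ofReal_mul_I, one_mul]

theorem inv_norm_inverse_sub_smul_one_sq_le [Nontrivial H]
    (hz : z = (‖z‖ : ℂ) * Complex.exp ((θ : ℂ) * Complex.I)) (hA : IsUnit (T - z • 1)) :
    ‖Ring.inverse (T - z • 1)‖⁻¹ ^ 2 ≤ ‖z‖ ^ 2 - 2 * rho T θ * ‖z‖ + ‖T‖ ^ 2 := by
  set ψ := ‖Ring.inverse (T - z • 1)‖⁻¹
  have hre_le : ∀ x : H, ‖x‖ = 1 →
      2 * ‖z‖ * (inner ℂ (Complex.exp (-(θ : ℂ) * Complex.I) • T x) x : ℂ).re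
        ≤ ‖z‖ ^ 2 + ‖T‖ ^ 2 - ψ ^ 2 := by
    intro x hx
    have hψ : ψ ≤ ‖(T - z • 1) x‖ := by simpa [hx] using inv_norm_inverse_mul_le hA x
    have hTx : ‖T x‖ ≤ ‖T‖ := by simpa [hx] using T.le_opNorm x
    have hsq := norm_sub_smul_one_apply_sq (T := T) hz x
    rw [hx] at hsq
    nlinarith [inv_nonneg.mpr (norm_nonneg (Ring.inverse (T - z • 1))), norm_nonneg (T x)]
  linarith [mul_rho_le T θ (by positivity) hre_le]

end Resolvent

theorem psi_numrange_bounds {H : Type*} [NormedAddCommGroup H] [InnerProductSpace ℂ H] [CompleteSpace H] [Nontrivial H]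
    (T : H →L[ℂ] H) (θ : ℝ) (z : ℂ)
    (hz : z = (‖z‖ : ℂ) * Complex.exp ((θ : ℂ) * Complex.I))
    (hρ : rho T θ < ‖z‖) :
    z ∉ spectrum ℂ T ∧
      ‖z‖ - rho T θ ≤ Psi T z ∧
      Psi T z ≤ Real.sqrt (‖z‖ ^ 2 - 2 * rho T θ * ‖z‖ + ‖T‖ ^ 2) := by
  have hgap : (‖z‖ - rho T θ).toNNReal = ‖z‖ - rho T θ := Real.coe_toNNReal _ (sub_pos.mpr hρ).le
  have hpos : 0 < (‖z‖ - rho T θ).toNNReal := Real.toNNReal_pos.mpr (sub_pos.mpr hρ)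
  have hcoercive : ∀ x, ‖x‖ ^ 2 * (‖z‖ - rho T θ).toNNReal ≤ ‖(inner ℂ ((T - z • 1) x) x : ℂ)‖ :=
    fun x => by simpa [hgap, mul_comm] using sub_rho_mul_norm_sq_le_norm_inner hz x
  have hA : IsUnit (T - z • 1) := isUnit_of_forall_le_norm_inner_map _ hpos hcoercive
  have hz_notMem : z ∉ spectrum ℂ T := notMem_spectrum_iff_isUnit_sub_smul_one.mpr hA
  have hPsi : Psi T z = ‖Ring.inverse (T - z • 1)‖⁻¹ := if_neg hz_notMem
  refine ⟨hz_notMem, ?_, ?_⟩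
  · simpa [hPsi, hgap] using
      inv_le_inv_norm_inverse hA (antilipschitz_of_forall_le_inner_map _ hpos hcoercive)
  · rw [hPsi]
    exact Real.le_sqrt_of_sq_le (inv_norm_inverse_sub_smul_one_sq_le hz hA)
end

section
/- Let T be a bounded linear operator on a complex Hilbert space H, and let z, z₀ ∈ ℂ with z ∉ σ(T), z ≠ 0 and z₀ ≠ 0. Then Ψ_T(z₀)/|z₀| ≤ (Ψ_T(z)/|z|) · (1 + ε_{z,z₀}), where ε_{z,z₀} = ‖T‖ |z − z₀| / ( |z₀| Ψ_T(z) ). -/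
open Filter ContinuousLinearMap

/-!
With `R = (T - z)⁻¹` and `S = (T - z₀)⁻¹`, the resolvent identity gives
`z R - z₀ S = (z - z₀) T R S`. Taking norms,
`‖z‖ ‖R‖ ≤ ‖z₀‖ ‖S‖ + ‖z - z₀‖ ‖T‖ ‖R‖ ‖S‖`, and dividing by `‖R‖ ‖S‖` yields
`‖z‖ Ψ(z₀) ≤ ‖z₀‖ Ψ(z) + ‖T‖ ‖z - z₀‖`, which is the estimate after division by `‖z‖ ‖z₀‖`.
-/

open scoped Ring

section NormedAlgebra

variable {A : Type*} [NormedRing A] [NormedAlgebra ℂ A] {a : A} {z z₀ : ℂ}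

theorem isUnit_sub_smul_one_of_notMem_spectrum (hz : z ∉ spectrum ℂ a) :
    IsUnit (a - z • (1 : A)) := by
  rw [spectrum.notMem_iff, Algebra.algebraMap_eq_smul_one] at hz
  simpa using hz.neg

theorem smul_inverse_sub_smul_one (hz : IsUnit (a - z • 1)) :
    z • (a - z • 1)⁻¹ʳ = a * (a - z • 1)⁻¹ʳ - 1 := by
  calc z • (a - z • 1)⁻¹ʳ = (a - (a - z • 1)) * (a - z • 1)⁻¹ʳ := by
        rw [sub_sub_cancel, smul_one_mul]
    _ = a * (a - z • 1)⁻¹ʳ - 1 := by rw [sub_mul, Ring.mul_inverse_cancel _ hz]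

theorem smul_inverse_sub_smul_inverse (hz : IsUnit (a - z • 1)) (hz₀ : IsUnit (a - z₀ • 1)) :
    z • (a - z • 1)⁻¹ʳ - z₀ • (a - z₀ • 1)⁻¹ʳ =
      (z - z₀) • (a * (a - z • 1)⁻¹ʳ * (a - z₀ • 1)⁻¹ʳ) := by
  rw [smul_inverse_sub_smul_one hz, smul_inverse_sub_smul_one hz₀, sub_sub_sub_cancel_right,
    ← mul_sub, Ring.inverse_sub_inverse (iff_of_true hz hz₀), sub_sub_sub_cancel_left, ← sub_smul,
    mul_smul_one, smul_mul_assoc, mul_smul_comm, mul_assoc]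

theorem norm_mul_norm_inverse_le (hz : IsUnit (a - z • 1)) (hz₀ : IsUnit (a - z₀ • 1)) :
    ‖z‖ * ‖(a - z • 1)⁻¹ʳ‖ ≤
      ‖z₀‖ * ‖(a - z₀ • 1)⁻¹ʳ‖ + ‖z - z₀‖ * (‖a‖ * ‖(a - z • 1)⁻¹ʳ‖ * ‖(a - z₀ • 1)⁻¹ʳ‖) := by
  have h := norm_sub_norm_le (z • (a - z • 1)⁻¹ʳ) (z₀ • (a - z₀ • 1)⁻¹ʳ)
  rw [smul_inverse_sub_smul_inverse hz hz₀, norm_smul, norm_smul, norm_smul] at h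
  calc ‖z‖ * ‖(a - z • 1)⁻¹ʳ‖
      ≤ ‖z₀‖ * ‖(a - z₀ • 1)⁻¹ʳ‖ + ‖z - z₀‖ * ‖a * (a - z • 1)⁻¹ʳ * (a - z₀ • 1)⁻¹ʳ‖ := by
        linarith
    _ ≤ _ := by gcongr; exact norm_mul₃_le

theorem norm_mul_inv_norm_inverse_le (hz : IsUnit (a - z • 1)) (hz₀ : IsUnit (a - z₀ • 1)) :
    ‖z‖ * ‖(a - z₀ • 1)⁻¹ʳ‖⁻¹ ≤ ‖z₀‖ * ‖(a - z • 1)⁻¹ʳ‖⁻¹ + ‖a‖ * ‖z - z₀‖ := by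
  have h := norm_mul_norm_inverse_le hz hz₀
  set R := (a - z • 1)⁻¹ʳ
  set S := (a - z₀ • 1)⁻¹ʳ
  rcases eq_or_ne S 0 with hS | hS
  · rw [hS, norm_zero, inv_zero, mul_zero]
    positivity
  have : Nontrivial A := nontrivial_of_ne _ _ hS
  have hs := norm_pos_iff.2 hS
  have hr : 0 < ‖R‖ := norm_pos_iff.2 hz.ringInverse.ne_zero
  calc ‖z‖ * ‖S‖⁻¹ = ‖z‖ * ‖R‖ / (‖R‖ * ‖S‖) := by field_simp
    _ ≤ (‖z₀‖ * ‖S‖ + ‖z - z₀‖ * (‖a‖ * ‖R‖ * ‖S‖)) / (‖R‖ * ‖S‖) := by gcongr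
    _ = ‖z₀‖ * ‖R‖⁻¹ + ‖a‖ * ‖z - z₀‖ := by field_simp

end NormedAlgebra

section Psi

variable {H : Type*} [NormedAddCommGroup H] [InnerProductSpace ℂ H] {T : H →L[ℂ] H} {z : ℂ}

theorem Psi_nonneg (T : H →L[ℂ] H) (z : ℂ) : 0 ≤ Psi T z := by
  unfold Psi
  split_ifs <;> positivity

theorem Psi_of_notMem_spectrum (hz : z ∉ spectrum ℂ T) :
    Psi T z = ‖(T - z • (1 : H →L[ℂ] H))⁻¹ʳ‖⁻¹ :=
  if_neg hz

theorem Psi_of_subsingleton [Subsingleton H] (T : H →L[ℂ] H) (z : ℂ) : Psi T z = 0 := by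
  unfold Psi
  split_ifs <;> simp [Subsingleton.elim _ (0 : H →L[ℂ] H)]

theorem Psi_pos [Nontrivial H] (hz : z ∉ spectrum ℂ T) : 0 < Psi T z := by
  rw [Psi_of_notMem_spectrum hz, inv_pos, norm_pos_iff]
  exact (isUnit_sub_smul_one_of_notMem_spectrum hz).ringInverse.ne_zero

theorem norm_mul_Psi_le (hz : z ∉ spectrum ℂ T) (z₀ : ℂ) :
    ‖z‖ * Psi T z₀ ≤ ‖z₀‖ * Psi T z + ‖T‖ * ‖z - z₀‖ := by
  by_cases hz₀ : z₀ ∈ spectrum ℂ T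
  · rw [Psi, if_pos hz₀, mul_zero]
    have := Psi_nonneg T z
    positivity
  rw [Psi_of_notMem_spectrum hz, Psi_of_notMem_spectrum hz₀]
  exact norm_mul_inv_norm_inverse_le (isUnit_sub_smul_one_of_notMem_spectrum hz)
    (isUnit_sub_smul_one_of_notMem_spectrum hz₀)

end Psi

theorem psi_ratio_estimate_general {H : Type*} [NormedAddCommGroup H] [InnerProductSpace ℂ H]
    (T : H →L[ℂ] H) (z z₀ : ℂ) (hz : z ∉ spectrum ℂ T) (hz0 : z ≠ 0) :
    Psi T z₀ / ‖z₀‖ ≤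
      (Psi T z / ‖z‖) *
        (1 + ‖T‖ * ‖z - z₀‖ / (‖z₀‖ * Psi T z)) := by
  rcases subsingleton_or_nontrivial H with hH | hH
  · simp [Psi_of_subsingleton]
  rcases eq_or_ne z₀ 0 with rfl | hz₀0
  · simp only [norm_zero, div_zero]
    have := Psi_nonneg T z
    positivity
  have hΨ := Psi_pos hz
  have hp : 0 < ‖z‖ := norm_pos_iff.2 hz0
  have hq : 0 < ‖z₀‖ := norm_pos_iff.2 hz₀0
  calc Psi T z₀ / ‖z₀‖ = ‖z‖ * Psi T z₀ / (‖z‖ * ‖z₀‖) := by field_simp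
    _ ≤ (‖z₀‖ * Psi T z + ‖T‖ * ‖z - z₀‖) / (‖z‖ * ‖z₀‖) := by gcongr; exact norm_mul_Psi_le hz z₀
    _ = Psi T z / ‖z‖ * (1 + ‖T‖ * ‖z - z₀‖ / (‖z₀‖ * Psi T z)) := by field_simp

theorem psi_ratio_estimate {H : Type*} [NormedAddCommGroup H] [InnerProductSpace ℂ H] [CompleteSpace H]
    (T : H →L[ℂ] H) (z z₀ : ℂ) (hz : z ∉ spectrum ℂ T) (hz0 : z ≠ 0) (hz₀0 : z₀ ≠ 0) :
    Psi T z₀ / ‖z₀‖ ≤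
      (Psi T z / ‖z‖) *
        (1 + ‖T‖ * ‖z - z₀‖ / (‖z₀‖ * Psi T z)) :=
  psi_ratio_estimate_general T z z₀ hz hz0
end

section
/- Let T be a bounded linear operator on a complex Hilbert space H and let c > ‖T‖. Then the function z ↦ Ψ_T(z)/|z| restricted to the set {z ∈ ℂ : |z| ≥ c} is Lipschitz with constant η(c) = ‖T‖/c², i.e. | Ψ_T(z)/|z| − Ψ_T(z₀)/|z₀| | ≤ (‖T‖/c²) |z − z₀| whenever |z| ≥ c and |z₀| ≥ c. -/
open Filter ContinuousLinearMap

/-!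
For `z ≠ 0`, `Ψ_T(z) / |z| = ‖(1 - z⁻¹ T)⁻¹‖⁻¹`, and `1 - z⁻¹ T` is invertible once `‖T‖ < |z|`.
In any normed ring `a ↦ ‖a⁻¹‖⁻¹` is 1-Lipschitz on the units, by the resolvent identity
`b⁻¹ - a⁻¹ = b⁻¹ (a - b) a⁻¹`; and `‖z⁻¹ T - z₀⁻¹ T‖ = ‖T‖ |z - z₀| / (|z| |z₀|) ≤ ‖T‖ |z - z₀| / c²`.
-/

open Ring

theorem Ring.inverse_neg {R : Type*} [Ring R] (a : R) : (-a)⁻¹ʳ = -a⁻¹ʳ := by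
  by_cases ha : IsUnit a
  · obtain ⟨u, rfl⟩ := ha
    rw [← Units.val_neg, inverse_unit, inverse_unit, inv_neg, Units.val_neg]
  · rw [inverse_non_unit a ha, inverse_non_unit _ ((IsUnit.neg_iff a).not.2 ha), neg_zero]

section NormedRing

variable {R : Type*} [NormedRing R] {a b : R}

theorem Ring.norm_inverse_le_add (h : IsUnit a ↔ IsUnit b) :
    ‖b⁻¹ʳ‖ ≤ ‖a⁻¹ʳ‖ + ‖b⁻¹ʳ‖ * ‖a - b‖ * ‖a⁻¹ʳ‖ :=
  calc ‖b⁻¹ʳ‖ = ‖a⁻¹ʳ + b⁻¹ʳ * (a - b) * a⁻¹ʳ‖ := by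
        rw [← inverse_sub_inverse h.symm, add_sub_cancel]
    _ ≤ ‖a⁻¹ʳ‖ + ‖b⁻¹ʳ‖ * ‖a - b‖ * ‖a⁻¹ʳ‖ :=
        (norm_add_le _ _).trans (by gcongr; exact norm_mul₃_le)

theorem Ring.inv_norm_inverse_sub_le (h : IsUnit a ↔ IsUnit b) :
    ‖a⁻¹ʳ‖⁻¹ - ‖b⁻¹ʳ‖⁻¹ ≤ ‖a - b‖ := by
  have key := norm_inverse_le_add h
  have key' := norm_inverse_le_add h.symm
  rcases (norm_nonneg a⁻¹ʳ).eq_or_lt with ha | ha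
  · rw [← ha, inv_zero, zero_sub]
    exact (neg_nonpos.2 (inv_nonneg.2 (norm_nonneg _))).trans (norm_nonneg _)
  rcases (norm_nonneg b⁻¹ʳ).eq_or_lt with hb | hb
  · rw [← hb, mul_zero, add_zero] at key'
    exact absurd key' ha.not_ge
  rw [inv_sub_inv ha.ne' hb.ne', div_le_iff₀ (mul_pos ha hb)]
  linarith

theorem Ring.abs_inv_norm_inverse_sub_le (h : IsUnit a ↔ IsUnit b) :
    |‖a⁻¹ʳ‖⁻¹ - ‖b⁻¹ʳ‖⁻¹| ≤ ‖a - b‖ :=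
  abs_sub_le_iff.2 ⟨inv_norm_inverse_sub_le h, norm_sub_rev a b ▸ inv_norm_inverse_sub_le h.symm⟩

end NormedRing

theorem norm_inv_sub_inv_le {K : Type*} [NormedDivisionRing K] {c : ℝ} {z w : K} (hc : 0 < c)
    (hz : c ≤ ‖z‖) (hw : c ≤ ‖w‖) : ‖z⁻¹ - w⁻¹‖ ≤ ‖z - w‖ / c ^ 2 := by
  have hz₀ : z ≠ 0 := norm_pos_iff.1 (hc.trans_le hz)
  have hw₀ : w ≠ 0 := norm_pos_iff.1 (hc.trans_le hw)
  rw [inv_sub_inv' hz₀ hw₀, norm_mul, norm_mul, norm_inv, norm_inv, norm_sub_rev, mul_comm,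
    ← mul_assoc, ← mul_inv, ← div_eq_inv_mul]
  gcongr
  calc c ^ 2 = c * c := sq c
    _ ≤ ‖w‖ * ‖z‖ := mul_le_mul hw hz hc.le (hc.le.trans hw)

section Psi

variable {H : Type*} [NormedAddCommGroup H] [InnerProductSpace ℂ H]

-- Also on the spectrum, where both sides are `0` since `Ring.inverse` vanishes on non-units.
theorem psi_eq_inv_norm_resolvent (T : H →L[ℂ] H) (z : ℂ) : Psi T z = ‖resolvent T z‖⁻¹ := by
  rw [Psi, resolvent, ← neg_sub, inverse_neg, norm_neg, ← Algebra.algebraMap_eq_smul_one]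
  split_ifs with hz
  · rw [inverse_non_unit _ hz, norm_zero, inv_zero]
  · rfl

theorem psi_div_norm_eq (T : H →L[ℂ] H) {z : ℂ} (hz : z ≠ 0) :
    Psi T z / ‖z‖ = ‖(1 - z⁻¹ • T)⁻¹ʳ‖⁻¹ := by
  have h := spectrum.units_smul_resolvent_self (r := Units.mk0 z hz) (a := T)
  have h1 : resolvent (z⁻¹ • T) (1 : ℂ) = (1 - z⁻¹ • T)⁻¹ʳ := by rw [resolvent, map_one]
  rw [Units.smul_def, Units.smul_def, Units.val_inv_eq_inv_val, Units.val_mk0, h1] at h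
  rw [psi_eq_inv_norm_resolvent, ← h, norm_smul, mul_inv, div_eq_mul_inv, mul_comm]

end Psi

theorem psi_over_abs_lipschitz {H : Type*} [NormedAddCommGroup H] [InnerProductSpace ℂ H] [CompleteSpace H]
    (T : H →L[ℂ] H) (c : ℝ) (hc : ‖T‖ < c) :
    ∀ z z₀ : ℂ, c ≤ ‖z‖ → c ≤ ‖z₀‖ →
      |Psi T z / ‖z‖ - Psi T z₀ / ‖z₀‖| ≤
        (‖T‖ / c ^ 2) * ‖z - z₀‖ := by
  intro z z₀ hz hz₀
  have hc₀ : 0 < c := (norm_nonneg T).trans_lt hc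
  have isUnit_one_sub {w : ℂ} (hw : c ≤ ‖w‖) : IsUnit (1 - w⁻¹ • T) := by
    refine isUnit_one_sub_of_norm_lt_one ?_
    rw [norm_smul, norm_inv, inv_mul_lt_one₀ (hc₀.trans_le hw)]
    exact hc.trans_le hw
  rw [psi_div_norm_eq T (norm_pos_iff.1 (hc₀.trans_le hz)),
    psi_div_norm_eq T (norm_pos_iff.1 (hc₀.trans_le hz₀))]
  calc _ ≤ ‖(1 - z⁻¹ • T) - (1 - z₀⁻¹ • T)‖ :=
        abs_inv_norm_inverse_sub_le (iff_of_true (isUnit_one_sub hz) (isUnit_one_sub hz₀))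
    _ = ‖z⁻¹ - z₀⁻¹‖ * ‖T‖ := by rw [sub_sub_sub_cancel_left, ← sub_smul, norm_smul, norm_sub_rev]
    _ ≤ ‖z - z₀‖ / c ^ 2 * ‖T‖ := by gcongr; exact norm_inv_sub_inv_le hc₀ hz hz₀
    _ = ‖T‖ / c ^ 2 * ‖z - z₀‖ := by ring
end

section
/- Let T be a bounded linear operator on a complex Hilbert space H, let B be a compact convex subset of ℂ ∖ σ(T), and let K = max{ Ψ_T(w)^{-1} : w ∈ B }. Then for all μ, η ∈ ℂ such that the segment [μ − η, μ + η] is contained in B, one has 2 Ψ_T(μ)^{-1} − Ψ_T(μ + η)^{-1} − Ψ_T(μ − η)^{-1} ≤ 2 K³ |η|². In other words, Ψ_T^{-1} is semiconvex on ℂ ∖ σ(T) with bound function C(z) = 2 Ψ_T(z)^{-3}. -/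
open Filter ContinuousLinearMap

/-!
Writing `R(z) = (z - T)⁻¹`, the first resolvent identity `R(s) - R(t) = (t - s) R(s) R(t)`,
applied twice, gives the exact second difference
`R(μ + η) + R(μ - η) - 2 R(μ) = 2 η² R(μ + η) R(μ - η) R(μ)`.
Taking norms and bounding each `‖R‖` on the segment by `K` gives the estimate, since
`Ψ_T⁻¹ = ‖R‖` everywhere (both vanish on the spectrum, by the conventions for `0⁻¹` and
`Ring.inverse`).
-/

theorem Ring.inverse_neg_s7 {A : Type*} [Ring A] (x : A) : Ring.inverse (-x) = -Ring.inverse x := by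
  by_cases hx : IsUnit x
  · obtain ⟨u, rfl⟩ := hx
    rw [← Units.val_neg, Ring.inverse_unit, Ring.inverse_unit, inv_neg, Units.val_neg]
  · rw [Ring.inverse_non_unit x hx, Ring.inverse_non_unit (-x) ((IsUnit.neg_iff x).not.mpr hx),
      neg_zero]

theorem inv_psi_eq_norm_resolvent {H : Type*} [NormedAddCommGroup H] [InnerProductSpace ℂ H]
    (T : H →L[ℂ] H) (z : ℂ) : (Psi T z)⁻¹ = ‖resolvent T z‖ := by
  have hneg : T - z • (1 : H →L[ℂ] H) = -(algebraMap ℂ (H →L[ℂ] H) z - T) := by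
    rw [Algebra.algebraMap_eq_smul_one, neg_sub]
  by_cases hz : z ∈ spectrum ℂ T
  · rw [Psi, if_pos hz, inv_zero, spectrum.resolvent_zero_of_mem_spectrum hz, norm_zero]
  · rw [Psi, if_neg hz, inv_inv, hneg, Ring.inverse_neg_s7, norm_neg, resolvent]

section Resolvent

variable {R A : Type*} [CommRing R] [Ring A] [Algebra R A] {a : A}

theorem resolvent_sub_resolvent_eq_smul_mul {s t : R}
    (hs : s ∈ resolventSet R a) (ht : t ∈ resolventSet R a) :
    resolvent a s - resolvent a t = (t - s) • (resolvent a s * resolvent a t) := by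
  rw [resolvent, resolvent, Ring.inverse_sub_inverse (iff_of_true hs ht), sub_sub_sub_cancel_right,
    ← map_sub, Algebra.algebraMap_eq_smul_one (t - s), mul_smul_comm, mul_one, smul_mul_assoc]

theorem resolvent_second_difference {μ η : R} (hμ : μ ∈ resolventSet R a)
    (hplus : μ + η ∈ resolventSet R a) (hminus : μ - η ∈ resolventSet R a) :
    resolvent a (μ + η) + resolvent a (μ - η) - (2 : R) • resolvent a μ =
      (2 * η ^ 2) • (resolvent a (μ + η) * resolvent a (μ - η) * resolvent a μ) := by
  have hplus_sub := resolvent_sub_resolvent_eq_smul_mul hplus hμ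
  have hminus_sub := resolvent_sub_resolvent_eq_smul_mul hminus hμ
  have hplus_minus := resolvent_sub_resolvent_eq_smul_mul hplus hminus
  rw [show μ - (μ + η) = -η by ring] at hplus_sub
  rw [show μ - (μ - η) = η by ring] at hminus_sub
  rw [show μ - η - (μ + η) = -(2 * η) by ring] at hplus_minus
  calc resolvent a (μ + η) + resolvent a (μ - η) - (2 : R) • resolvent a μ
      = (resolvent a (μ + η) - resolvent a μ) + (resolvent a (μ - η) - resolvent a μ) := by
        rw [two_smul]; abel
    _ = (-η) • ((resolvent a (μ + η) - resolvent a (μ - η)) * resolvent a μ) := by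
        rw [hplus_sub, hminus_sub, sub_mul, smul_sub, neg_smul, neg_smul]
        abel
    _ = (2 * η ^ 2) • (resolvent a (μ + η) * resolvent a (μ - η) * resolvent a μ) := by
        rw [hplus_minus, smul_mul_assoc, smul_smul]
        congr 1
        ring

end Resolvent

theorem two_mul_norm_resolvent_sub_le {𝕜 A : Type*} [RCLike 𝕜] [NormedRing A] [NormedAlgebra 𝕜 A]
    {a : A} {μ η : 𝕜} (hμ : μ ∈ resolventSet 𝕜 a)
    (hplus : μ + η ∈ resolventSet 𝕜 a) (hminus : μ - η ∈ resolventSet 𝕜 a) :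
    2 * ‖resolvent a μ‖ - ‖resolvent a (μ + η)‖ - ‖resolvent a (μ - η)‖ ≤
      2 * ‖η‖ ^ 2 * (‖resolvent a (μ + η)‖ * ‖resolvent a (μ - η)‖ * ‖resolvent a μ‖) := by
  set P := resolvent a (μ + η)
  set M := resolvent a (μ - η)
  set Z := resolvent a μ
  have hsecond := resolvent_second_difference hμ hplus hminus
  calc 2 * ‖Z‖ - ‖P‖ - ‖M‖
      = ‖(2 : 𝕜) • Z‖ - (‖P‖ + ‖M‖) := by rw [norm_smul, RCLike.norm_two]; ring
    _ ≤ ‖(2 : 𝕜) • Z‖ - ‖P + M‖ := by linarith [norm_add_le P M]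
    _ ≤ ‖P + M - (2 : 𝕜) • Z‖ := by rw [norm_sub_rev]; exact norm_sub_norm_le _ _
    _ = 2 * ‖η‖ ^ 2 * ‖P * M * Z‖ := by
        rw [hsecond, norm_smul, norm_mul, norm_pow, RCLike.norm_two]
    _ ≤ 2 * ‖η‖ ^ 2 * (‖P‖ * ‖M‖ * ‖Z‖) := by
        gcongr
        exact norm_mul₃_le

theorem psi_inv_semiconvex_general {H : Type*} [NormedAddCommGroup H] [InnerProductSpace ℂ H]
    (T : H →L[ℂ] H) (B : Set ℂ)
    (hB : B ⊆ (spectrum ℂ T)ᶜ) (K : ℝ)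
    (hK : IsGreatest ((fun w => (Psi T w)⁻¹) '' B) K) :
    ∀ μ η : ℂ, segment ℝ (μ - η) (μ + η) ⊆ B →
      2 * (Psi T μ)⁻¹ - (Psi T (μ + η))⁻¹ - (Psi T (μ - η))⁻¹ ≤
        2 * K ^ 3 * ‖η‖ ^ 2 := by
  intro μ η hseg
  have hμ : μ ∈ B := hseg <| by
    simpa only [midpoint_sub_add] using midpoint_mem_segment (𝕜 := ℝ) (μ - η) (μ + η)
  have hplus : μ + η ∈ B := hseg (right_mem_segment ℝ _ _)
  have hminus : μ - η ∈ B := hseg (left_mem_segment ℝ _ _)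
  have hres : ∀ w ∈ B, w ∈ resolventSet ℂ T := fun w hw => not_not.mp (hB hw)
  have hbound : ∀ w ∈ B, ‖resolvent T w‖ ≤ K := fun w hw =>
    inv_psi_eq_norm_resolvent T w ▸ hK.2 ⟨w, hw, rfl⟩
  have hK0 : 0 ≤ K := (norm_nonneg _).trans (hbound μ hμ)
  simp only [inv_psi_eq_norm_resolvent]
  calc _ ≤ 2 * ‖η‖ ^ 2 * (‖resolvent T (μ + η)‖ * ‖resolvent T (μ - η)‖ * ‖resolvent T μ‖) :=
        two_mul_norm_resolvent_sub_le (hres μ hμ) (hres _ hplus) (hres _ hminus)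
    _ ≤ 2 * ‖η‖ ^ 2 * (K * K * K) := by
        gcongr <;> apply hbound <;> assumption
    _ = 2 * K ^ 3 * ‖η‖ ^ 2 := by ring

theorem psi_inv_semiconvex {H : Type*} [NormedAddCommGroup H] [InnerProductSpace ℂ H] [CompleteSpace H]
    (T : H →L[ℂ] H) (B : Set ℂ) (hBcomp : IsCompact B) (hBconv : Convex ℝ B)
    (hB : B ⊆ (spectrum ℂ T)ᶜ) (K : ℝ)
    (hK : IsGreatest ((fun w => (Psi T w)⁻¹) '' B) K) :
    ∀ μ η : ℂ, segment ℝ (μ - η) (μ + η) ⊆ B →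
      2 * (Psi T μ)⁻¹ - (Psi T (μ + η))⁻¹ - (Psi T (μ - η))⁻¹ ≤
        2 * K ^ 3 * ‖η‖ ^ 2 :=
  psi_inv_semiconvex_general T B hB K hK
end

section
/- For t ∈ ℂ with Re t > 0, let f_t(z) = √(z² − z + t) using the principal branch of the square root, which is analytic in a neighborhood of z = 0, and let f̂_n(t) = (dⁿ/dzⁿ f_t)(0) / n! be its n-th Taylor coefficient at 0. Then for every r with 0 < r < 1/4 and every M > 0, there exists a positive integer N = N(r, M) such that for all t ∈ ℂ with |t − 1/4| = r one has max_{1 ≤ n ≤ N} |f̂_n(t)| > M. -/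
/-!
If for some `t` on the circle all Taylor coefficients `f̂ₙ(t)`, `n ≥ 1`, were bounded by `M`,
the Taylor series of `f_t` would converge on the unit disc, and by the identity theorem its sum `g`
would satisfy `g² = z² - z + t` there. But for `0 < |t - 1/4| < 1/4` the quadratic has a simple
zero `(1 - √(1 - 4t))/2` inside the unit disc, while `g²` can only have zeros of even order. Since
each `t ↦ f̂ₙ(t)` is continuous, compactness of the circle makes the index `n` uniform in `t`.
-/

open Filter Metric Topology

section ParametricDerivative

variable {𝕜 E F : Type*} [NontriviallyNormedField 𝕜] [NormedAddCommGroup E] [NormedSpace 𝕜 E]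
  [NormedAddCommGroup F] [NormedSpace 𝕜 F]

theorem ContDiffAt.uncurry_iteratedDeriv {f : E → 𝕜 → F} {p : E × 𝕜} {m : WithTop ℕ∞} {k : ℕ}
    (hf : ContDiffAt 𝕜 (m + k) (Function.uncurry f) p) :
    ContDiffAt 𝕜 m (Function.uncurry fun x => iteratedDeriv k (f x)) p := by
  induction k generalizing m with
  | zero => simpa using hf
  | succ k ih =>
    have hk : ContDiffAt 𝕜 (m + 1) (Function.uncurry fun x => iteratedDeriv k (f x)) p :=
      ih (by rwa [add_assoc, add_comm 1, ← Nat.cast_succ])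
    have hderiv := ContDiffAt.fderiv (f := fun q : E × 𝕜 => iteratedDeriv k (f q.1))
      (g := Prod.snd) (hk.comp (p, p.2) (contDiffAt_fst.fst.prodMk contDiffAt_snd))
      contDiffAt_snd le_rfl
    simp only [iteratedDeriv_succ]
    exact hderiv.clm_apply contDiffAt_const

end ParametricDerivative

section PowerSeries

variable {𝕜 : Type*} [NontriviallyNormedField 𝕜]

theorem FormalMultilinearSeries.one_le_radius_ofScalars {E : Type*} [NormedRing E]
    [NormedAlgebra 𝕜 E] {c : ℕ → 𝕜} {C : ℝ} (hc : ∀ᶠ n in atTop, ‖c n‖ ≤ C) :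
    1 ≤ (ofScalars E c).radius := by
  simpa using (ofScalars E c).le_radius_of_eventually_le (r := 1) C <| by
    filter_upwards [hc, eventually_ge_atTop 1] with n hn hn1
    simpa using (ofScalars_norm_le E c n hn1).trans hn

theorem HasFPowerSeriesAt.eventuallyEq_sum {E F : Type*} [NormedAddCommGroup E]
    [NormedSpace 𝕜 E] [NormedAddCommGroup F] [NormedSpace 𝕜 F] [CompleteSpace F]
    {f : E → F} {p : FormalMultilinearSeries 𝕜 E F} (hf : HasFPowerSeriesAt f p 0) :
    f =ᶠ[𝓝 0] p.sum := by
  filter_upwards [hf.eventually_hasSum, eball_mem_nhds 0 hf.radius_pos] with y hfy hy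
  simpa using hfy.unique (p.hasSum hy)

theorem deriv_eq_zero_of_eventuallyEq_sq {g q : 𝕜 → 𝕜} {z : 𝕜} (hg : DifferentiableAt 𝕜 g z)
    (hgq : (g · ^ 2) =ᶠ[𝓝 z] q) (hqz : q z = 0) : deriv q z = 0 := by
  have hgz : g z = 0 := pow_eq_zero_iff two_ne_zero |>.mp (hgq.eq_of_nhds.trans hqz)
  rw [← hgq.deriv_eq, (hg.hasDerivAt.fun_pow 2).deriv, hgz]
  simp

theorem AnalyticOnNhd.deriv_eq_zero_of_eventuallyEq_sq {g q : 𝕜 → 𝕜} {U : Set 𝕜} {x z : 𝕜}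
    (hg : AnalyticOnNhd 𝕜 g U) (hq : AnalyticOnNhd 𝕜 q U) (hU : IsPreconnected U)
    (hUo : IsOpen U) (hx : x ∈ U) (hgq : (g · ^ 2) =ᶠ[𝓝 x] q) (hz : z ∈ U) (hqz : q z = 0) :
    deriv q z = 0 := by
  have hEq : Set.EqOn (g · ^ 2) q U := (hg.pow 2).eqOn_of_preconnected_of_eventuallyEq hq hU hx hgq
  exact _root_.deriv_eq_zero_of_eventuallyEq_sq (hg z hz).differentiableAt
    (hEq.eventuallyEq_of_mem (hUo.mem_nhds hz)) hqz

end PowerSeries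

theorem IsCompact.exists_forall_exists_lt {X : Type*} [TopologicalSpace X] {s : Set X}
    (hs : IsCompact s) {u : ℕ → X → ℝ} (hu : ∀ n, ContinuousOn (u n) s) {M : ℝ}
    (h : ∀ x ∈ s, ∃ n, M < u n x) : ∃ N, ∀ x ∈ s, ∃ n ≤ N, M < u n x := by
  choose U hUo hU using fun n => continuousOn_iff'.1 (hu n) (Set.Ioi M) isOpen_Ioi
  obtain ⟨I, hI⟩ := hs.elim_finite_subcover U hUo fun x hx => by
    obtain ⟨n, hn⟩ := h x hx
    exact Set.mem_iUnion.2 ⟨n, ((hU n).subset ⟨hn, hx⟩).1⟩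
  refine ⟨I.sup id, fun x hx => ?_⟩
  obtain ⟨n, hnI, hxn⟩ := Set.mem_iUnion₂.1 (hI hx)
  exact ⟨n, I.le_sup (f := id) hnI, ((hU n).symm.subset ⟨hxn, hx⟩).1⟩

noncomputable def sqrtQuad (t z : ℂ) : ℂ := (z ^ 2 - z + t) ^ ((1 : ℂ) / 2)

noncomputable def taylorCoeff (f : ℂ → ℂ) (n : ℕ) : ℂ := iteratedDeriv n f 0 / (n.factorial : ℂ)

theorem sqrtQuad_sq (t z : ℂ) : sqrtQuad t z ^ 2 = z ^ 2 - z + t := by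
  simp [sqrtQuad]

theorem analyticAt_uncurry_sqrtQuad {t z : ℂ} (h : z ^ 2 - z + t ∈ Complex.slitPlane) :
    AnalyticAt ℂ (Function.uncurry sqrtQuad) (t, z) :=
  (((analyticAt_snd.pow 2).sub analyticAt_snd).add analyticAt_fst).cpow analyticAt_const h

theorem analyticAt_sqrtQuad {t z : ℂ} (h : z ^ 2 - z + t ∈ Complex.slitPlane) :
    AnalyticAt ℂ (sqrtQuad t) z :=
  (((analyticAt_id.pow 2).sub analyticAt_id).add analyticAt_const).cpow analyticAt_const h

theorem continuousAt_taylorCoeff_sqrtQuad {t : ℂ} (ht : t ∈ Complex.slitPlane) (n : ℕ) :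
    ContinuousAt (fun s => taylorCoeff (sqrtQuad s) n) t := by
  have hF : ContDiffAt ℂ (0 + n) (Function.uncurry sqrtQuad) (t, 0) :=
    (analyticAt_uncurry_sqrtQuad (by simpa using ht)).contDiffAt
  have hD := hF.uncurry_iteratedDeriv.continuousAt
  exact (hD.comp (f := fun s => (s, (0 : ℂ))) (by fun_prop)).div_const _

theorem mem_slitPlane_of_norm_sub_quarter_lt {t : ℂ} (ht : ‖t - 1 / 4‖ < 1 / 4) :
    t ∈ Complex.slitPlane := by
  refine Complex.mem_slitPlane_iff.2 (Or.inl ?_)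
  have := (abs_le.1 ((t - 1 / 4).abs_re_le_norm)).1
  norm_num at this
  linarith

theorem exists_simple_root_quadratic_mem_ball {t : ℂ} (ht₀ : t ≠ 1 / 4)
    (ht : ‖t - 1 / 4‖ < 1 / 4) : ∃ z ∈ ball (0 : ℂ) 1, z ^ 2 - z + t = 0 ∧ 2 * z - 1 ≠ 0 := by
  obtain ⟨w, hw⟩ := IsAlgClosed.exists_pow_nat_eq (1 - 4 * t) two_pos
  have hw1 : ‖w‖ < 1 := by
    have : ‖w‖ ^ 2 < 1 := by
      rw [← norm_pow, hw, show 1 - 4 * t = -4 * (t - 1 / 4) by ring, norm_mul]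
      norm_num
      linarith
    nlinarith [norm_nonneg w]
  refine ⟨(1 - w) / 2, ?_, by linear_combination hw / 4, fun h => ht₀ ?_⟩
  · rw [mem_ball_zero_iff, norm_div, Complex.norm_two]
    linarith [norm_sub_le 1 w, norm_one (α := ℂ)]
  · linear_combination (1 / 4 : ℂ) * hw + (w / 4) * h

theorem exists_lt_norm_taylorCoeff_sqrtQuad {t : ℂ} (ht₀ : t ≠ 1 / 4) (ht : ‖t - 1 / 4‖ < 1 / 4)
    (M : ℝ) : ∃ n, 1 ≤ n ∧ M < ‖taylorCoeff (sqrtQuad t) n‖ := by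
  by_contra! hM
  set p := FormalMultilinearSeries.ofScalars ℂ (taylorCoeff (sqrtQuad t))
  have hf : HasFPowerSeriesAt (sqrtQuad t) p 0 :=
    (analyticAt_sqrtQuad (by simpa using mem_slitPlane_of_norm_sub_quarter_lt ht)).hasFPowerSeriesAt
  have hr : ((1 : NNReal) : ENNReal) ≤ p.radius :=
    FormalMultilinearSeries.one_le_radius_ofScalars (eventually_atTop.2 ⟨1, hM⟩)
  have hp : AnalyticOnNhd ℂ p.sum (ball 0 1) := p.analyticOnNhd.mono <| by
    rw [← NNReal.coe_one, ← eball_coe]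
    exact eball_subset_eball hr
  have hsq : (p.sum · ^ 2) =ᶠ[𝓝 0] fun z => z ^ 2 - z + t := by
    filter_upwards [hf.eventuallyEq_sum] with z hz
    rw [← hz, sqrtQuad_sq]
  obtain ⟨z, hz, hroot, hsimple⟩ := exists_simple_root_quadratic_mem_ball ht₀ ht
  have hderiv : HasDerivAt (fun z => z ^ 2 - z + t) (2 * z - 1) z := by
    simpa using ((hasDerivAt_pow 2 z).sub (hasDerivAt_id z)).add_const t
  apply hsimple
  rw [← hderiv.deriv]
  exact hp.deriv_eq_zero_of_eventuallyEq_sq (fun _ _ => by fun_prop)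
    (convex_ball 0 1).isPreconnected isOpen_ball (mem_ball_self one_pos) hsq hz hroot

theorem taylor_coeff_sqrt_blowup_general (r : ℝ) (hr0 : 0 < r) (hr : r < 1 / 4)
    (M : ℝ) :
    ∃ N : ℕ, 0 < N ∧
      ∀ t : ℂ, ‖t - 1 / 4‖ = r →
        ∃ n : ℕ, 1 ≤ n ∧ n ≤ N ∧
          M < ‖
            (iteratedDeriv n (fun z : ℂ => (z ^ 2 - z + t) ^ ((1 : ℂ) / 2)) 0 / ((Nat.factorial n : ℕ) : ℂ))‖ := by
  have hcont (n : ℕ) :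
      ContinuousOn (fun t => ‖taylorCoeff (sqrtQuad t) (n + 1)‖) (sphere (1 / 4) r) :=
    fun t ht => (continuousAt_taylorCoeff_sqrtQuad (mem_slitPlane_of_norm_sub_quarter_lt
      (mem_sphere_iff_norm.1 ht ▸ hr)) _).norm.continuousWithinAt
  have hbig : ∀ t ∈ sphere (1 / 4 : ℂ) r, ∃ n, M < ‖taylorCoeff (sqrtQuad t) (n + 1)‖ := by
    intro t ht
    rw [mem_sphere_iff_norm] at ht
    have ht₀ : t ≠ 1 / 4 := fun h => by simp [h] at ht; linarith
    obtain ⟨n, hn, hM⟩ := exists_lt_norm_taylorCoeff_sqrtQuad ht₀ (ht ▸ hr) M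
    exact ⟨n - 1, by rwa [Nat.sub_add_cancel hn]⟩
  obtain ⟨N, hN⟩ := (isCompact_sphere (1 / 4 : ℂ) r).exists_forall_exists_lt hcont hbig
  refine ⟨N + 1, N.succ_pos, fun t ht => ?_⟩
  obtain ⟨n, hnN, hM⟩ := hN t (mem_sphere_iff_norm.2 ht)
  exact ⟨n + 1, le_add_self, by omega, hM⟩

theorem taylor_coeff_sqrt_blowup (r : ℝ) (hr0 : 0 < r) (hr : r < 1 / 4)
    (M : ℝ) (hM : 0 < M) :
    ∃ N : ℕ, 0 < N ∧
      ∀ t : ℂ, ‖t - 1 / 4‖ = r →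
        ∃ n : ℕ, 1 ≤ n ∧ n ≤ N ∧
          M < ‖
            (iteratedDeriv n (fun z : ℂ => (z ^ 2 - z + t) ^ ((1 : ℂ) / 2)) 0 / ((Nat.factorial n : ℕ) : ℂ))‖ :=
  taylor_coeff_sqrt_blowup_general r hr0 hr M
end
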